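/- arXiv:2306.13502 — 2 statements merged into one kernel-verified Lean document; each statement's English description precedes it below -/
import Mathlib

section
/- Let f ∈ F_q[x] be a monic irreducible polynomial that is invariant under a subgroup G ≤ PGL₂(F_q), such that all G-orbits (under Möbius transformation) in the set of roots of f are regular. Then G is cyclic and |G| divides deg(f). -/
open Polynomial

attribute [local instance] Classical.propDecidable

noncomputable section

variable (K : Type*) [Field K]

/-- The projective general linear group `PGL₂(K)`. -/
abbrev PGL2 := Matrix.GeneralLinearGroup (Fin 2) K ⧸
  Subgroup.center (Matrix.GeneralLinearGroup (Fin 2) K)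

variable {K}

/-- entry of a matrix in `GL₂(K)` -/
def ent (A : Matrix.GeneralLinearGroup (Fin 2) K) (i j : Fin 2) : K :=
  (A : Matrix (Fin 2) (Fin 2) K) i j

/-- `(cx+d)^n · p((ax+b)/(cx+d))`, the raw (un-normalized) transform. -/
def rawAct (A : Matrix.GeneralLinearGroup (Fin 2) K) (n : ℕ) (p : Polynomial K) :
    Polynomial K :=
  ∑ i ∈ Finset.range (n + 1),
    C (p.coeff i) * (C (ent A 0 0) * X + C (ent A 0 1)) ^ i *
      (C (ent A 1 0) * X + C (ent A 1 1)) ^ (n - i)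

/-- The normalized polynomial transformation `[A]∗f`. -/
def polyAct (A : Matrix.GeneralLinearGroup (Fin 2) K) (f : Polynomial K) : Polynomial K :=
  rawAct A f.natDegree f * C (rawAct A f.natDegree f).leadingCoeff⁻¹

/-- Möbius action of `GL₂(K)` on `K̄ ∪ {∞}`; `none` plays the role of `∞`. -/
def mob (A : Matrix.GeneralLinearGroup (Fin 2) K) :
    Option (AlgebraicClosure K) → Option (AlgebraicClosure K)
  | none =>
      if algebraMap K (AlgebraicClosure K) (ent A 1 0) = 0 then none
      else some (algebraMap K (AlgebraicClosure K) (ent A 0 0) /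
        algebraMap K (AlgebraicClosure K) (ent A 1 0))
  | some x =>
      if algebraMap K (AlgebraicClosure K) (ent A 1 0) * x +
          algebraMap K (AlgebraicClosure K) (ent A 1 1) = 0 then none
      else some ((algebraMap K (AlgebraicClosure K) (ent A 0 0) * x +
          algebraMap K (AlgebraicClosure K) (ent A 0 1)) /
        (algebraMap K (AlgebraicClosure K) (ent A 1 0) * x +
          algebraMap K (AlgebraicClosure K) (ent A 1 1)))

/-- Möbius orbit of a point under a subgroup `G ≤ PGL₂(K)`. -/
def mobOrbit (G : Subgroup (PGL2 K)) (v : Option (AlgebraicClosure K)) :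
    Set (Option (AlgebraicClosure K)) :=
  {w | ∃ A : Matrix.GeneralLinearGroup (Fin 2) K,
    (QuotientGroup.mk A : PGL2 K) ∈ G ∧ mob A v = w}

/-- Orbit of a polynomial under the normalized action of `G ≤ PGL₂(K)`. -/
def polyOrbit (G : Subgroup (PGL2 K)) (r : Polynomial K) : Set (Polynomial K) :=
  {t | ∃ A : Matrix.GeneralLinearGroup (Fin 2) K,
    (QuotientGroup.mk A : PGL2 K) ∈ G ∧ polyAct A r = t}

/-- `f` has no roots in the Möbius `G`-orbit of `∞`. -/
def NoRootsInOrbitInfty (G : Subgroup (PGL2 K)) (f : Polynomial K) : Prop :=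
  ∀ x : AlgebraicClosure K, some x ∈ mobOrbit G none → Polynomial.aeval x f ≠ 0

/-- `f` is `G`-invariant for the normalized polynomial action. -/
def GInvariant (G : Subgroup (PGL2 K)) (f : Polynomial K) : Prop :=
  ∀ A : Matrix.GeneralLinearGroup (Fin 2) K,
    (QuotientGroup.mk A : PGL2 K) ∈ G → polyAct A f = f

/-- `Q_G = g/h` is a quotient map for the finite subgroup `G ≤ PGL₂(K)`:
a `G`-invariant reduced rational function with `g` monic and
`deg h < deg g = |G|` (equivalently, a normalized generator of `K(x)^G`). -/
structure IsQuotientMap (G : Subgroup (PGL2 K)) (g h : Polynomial K) : Prop where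
  monic_g : g.Monic
  h_ne : h ≠ 0
  coprime : IsCoprime g h
  deg_lt : h.natDegree < g.natDegree
  deg_eq : g.natDegree = Nat.card G
  invariant : ∀ A : Matrix.GeneralLinearGroup (Fin 2) K,
    (QuotientGroup.mk A : PGL2 K) ∈ G →
      rawAct A g.natDegree g * h = rawAct A g.natDegree h * g

/-- The `Q`-transform `F^{g/h}(x) = h(x)^{deg F} F(g(x)/h(x))`. -/
def Qtransform (g h F : Polynomial K) : Polynomial K :=
  ∑ i ∈ Finset.range (F.natDegree + 1), C (F.coeff i) * g ^ i * h ^ (F.natDegree - i)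

/-- set of roots of `f` in the algebraic closure -/
def rootSetAC (f : Polynomial K) : Set (AlgebraicClosure K) :=
  {x | Polynomial.aeval x f = 0}

end

section AuxProof

open Polynomial Finset

variable {K : Type*} [Field K]

local notation "L" => AlgebraicClosure K
local notation "GL2K" => Matrix.GeneralLinearGroup (Fin 2) K
local notation "alg" => algebraMap K (AlgebraicClosure K)

lemma ent_mul (A B : GL2K) (i j : Fin 2) :
    ent (A * B) i j = ent A i 0 * ent B 0 j + ent A i 1 * ent B 1 j := by
  simp [ent, Units.val_mul, Matrix.mul_apply, Fin.sum_univ_two]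

lemma det_ent_ne (A : GL2K) : ent A 0 0 * ent A 1 1 - ent A 0 1 * ent A 1 0 ≠ 0 := by
  have h : IsUnit ((A : Matrix (Fin 2) (Fin 2) K)).det :=
    (Matrix.isUnit_iff_isUnit_det _).mp A.isUnit
  rw [Matrix.det_fin_two] at h
  intro hc
  simp only [ent] at hc
  rw [hc] at h
  exact not_isUnit_zero h

lemma det_alg_ne (A : GL2K) :
    alg (ent A 0 0) * alg (ent A 1 1) - alg (ent A 0 1) * alg (ent A 1 0) ≠ 0 := by
  intro hc
  apply det_ent_ne A
  apply (algebraMap K L).injective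
  rw [map_sub, map_mul, map_mul, map_zero]
  exact hc

lemma mob_none_eq (A : GL2K) : mob A none =
    if alg (ent A 1 0) = 0 then none else some (alg (ent A 0 0) / alg (ent A 1 0)) := rfl

lemma mob_some_eq (A : GL2K) (x : L) : mob A (some x) =
    if alg (ent A 1 0) * x + alg (ent A 1 1) = 0 then none
    else some ((alg (ent A 0 0) * x + alg (ent A 0 1)) /
      (alg (ent A 1 0) * x + alg (ent A 1 1))) := rfl

lemma aeval_rawAct (A : GL2K) (n : ℕ) (p : Polynomial K) (x : L) :
    Polynomial.aeval x (rawAct A n p) =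
      ∑ i ∈ Finset.range (n + 1), alg (p.coeff i) *
        (alg (ent A 0 0) * x + alg (ent A 0 1)) ^ i *
        (alg (ent A 1 0) * x + alg (ent A 1 1)) ^ (n - i) := by
  simp [rawAct, map_sum]

lemma aeval_rawAct_of_den_ne (A : GL2K) {n : ℕ} {p : Polynomial K} (hp : p.natDegree ≤ n) (x : L)
    (hx : alg (ent A 1 0) * x + alg (ent A 1 1) ≠ 0) :
    Polynomial.aeval x (rawAct A n p) =
      (alg (ent A 1 0) * x + alg (ent A 1 1)) ^ n *
        Polynomial.aeval ((alg (ent A 0 0) * x + alg (ent A 0 1)) /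
          (alg (ent A 1 0) * x + alg (ent A 1 1))) p := by
  rw [aeval_rawAct, Polynomial.aeval_eq_sum_range' (Nat.lt_succ_of_le hp), Finset.mul_sum]
  refine Finset.sum_congr rfl fun i hi => ?_
  rw [Finset.mem_range, Nat.lt_succ_iff] at hi
  rw [Algebra.smul_def, div_pow, ← pow_mul_pow_sub _ hi]
  have h1 : (alg (ent A 1 0) * x + alg (ent A 1 1)) ^ i ≠ 0 := pow_ne_zero _ hx
  have h1' := mul_inv_cancel₀ h1
  linear_combination (-(alg (p.coeff i) * (alg (ent A 0 0) * x + alg (ent A 0 1)) ^ i *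
    (alg (ent A 1 0) * x + alg (ent A 1 1)) ^ (n - i))) * h1'

lemma rawAct_ne_zero {G : Subgroup (PGL2 K)} {f : Polynomial K} (hf : f ≠ 0)
    (hfinv : GInvariant G f) {A : GL2K} (hA : (QuotientGroup.mk A : PGL2 K) ∈ G) :
    rawAct A f.natDegree f ≠ 0 := by
  intro h
  apply hf
  rw [← hfinv A hA, polyAct, h, zero_mul]

lemma mob_root {G : Subgroup (PGL2 K)} {f : Polynomial K} (hf : f.Monic)
    (hn : 0 < f.natDegree) (hfinv : GInvariant G f)
    {A : GL2K} (hA : (QuotientGroup.mk A : PGL2 K) ∈ G) {x : L}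
    (hx : Polynomial.aeval x f = 0) :
    ∃ y : L, mob A (some x) = some y ∧ Polynomial.aeval y f = 0 := by
  set n := f.natDegree with hndef
  have hfne : f ≠ 0 := hf.ne_zero
  have hraw : rawAct A n f ≠ 0 := rawAct_ne_zero hfne hfinv hA
  have hlc : alg ((rawAct A n f).leadingCoeff)⁻¹ ≠ 0 := by
    rw [Ne, _root_.map_eq_zero, inv_eq_zero, leadingCoeff_eq_zero]
    exact hraw
  have hfx : Polynomial.aeval x (polyAct A f) = 0 := by rw [hfinv A hA]; exact hx
  rw [polyAct, map_mul, aeval_C] at hfx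
  have h2 : Polynomial.aeval x (rawAct A n f) = 0 := by
    rcases mul_eq_zero.mp hfx with h | h
    · exact h
    · exact absurd h hlc
  by_cases hden : alg (ent A 1 0) * x + alg (ent A 1 1) = 0
  · exfalso
    rw [aeval_rawAct] at h2
    rw [Finset.sum_eq_single_of_mem n (Finset.self_mem_range_succ n) (fun i hi hine => by
        rw [hden, zero_pow (Nat.sub_ne_zero_of_lt
          (lt_of_le_of_ne (Nat.lt_succ_iff.mp (Finset.mem_range.mp hi)) hine)), mul_zero]),
      Nat.sub_self, pow_zero, mul_one] at h2
    have hcn : f.coeff n = 1 := hf.coeff_natDegree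
    rw [hcn, map_one, one_mul] at h2
    have hnum : alg (ent A 0 0) * x + alg (ent A 0 1) = 0 := (pow_eq_zero_iff hn.ne').mp h2
    apply det_alg_ne A
    have heq : alg (ent A 0 0) * alg (ent A 1 1) - alg (ent A 0 1) * alg (ent A 1 0) =
        alg (ent A 0 0) * (alg (ent A 1 0) * x + alg (ent A 1 1)) -
        alg (ent A 1 0) * (alg (ent A 0 0) * x + alg (ent A 0 1)) := by ring
    rw [heq, hden, hnum, mul_zero, mul_zero, sub_zero]
  · refine ⟨_, by rw [mob_some_eq A x, if_neg hden], ?_⟩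
    rw [aeval_rawAct_of_den_ne A le_rfl x hden] at h2
    rcases mul_eq_zero.mp h2 with h | h
    · exact absurd h (pow_ne_zero _ hden)
    · exact h

lemma center_scalar {Z : GL2K} (hZ : Z ∈ Subgroup.center GL2K) :
    ∃ c : K, c ≠ 0 ∧ ∀ i j, ent Z i j = if i = j then c else 0 := by
  have hcomm := Subgroup.mem_center_iff.mp hZ
  have hU : ∀ (u : Matrix (Fin 2) (Fin 2) K), IsUnit u →
      u * (Z : Matrix (Fin 2) (Fin 2) K) = (Z : Matrix (Fin 2) (Fin 2) K) * u := by
    intro u hu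
    obtain ⟨v, hv⟩ := hu
    have := hcomm v
    have := congrArg Units.val this
    rw [Units.val_mul, Units.val_mul, hv] at this
    exact this
  have hU1 : IsUnit !![(1:K), 1; 0, 1] := by
    apply (Matrix.isUnit_iff_isUnit_det _).mpr
    rw [Matrix.det_fin_two]
    simp
  have hU2 : IsUnit !![(1:K), 0; 1, 1] := by
    apply (Matrix.isUnit_iff_isUnit_det _).mpr
    rw [Matrix.det_fin_two]
    simp
  have h1 := hU _ hU1
  have h2 := hU _ hU2
  have e1 := congrFun (congrFun h1 0) 0
  have e2 := congrFun (congrFun h1 0) 1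
  have e3 := congrFun (congrFun h2 0) 0
  simp [Matrix.mul_apply, Fin.sum_univ_two] at e1 e2 e3
  have hz10 : (Z : Matrix (Fin 2) (Fin 2) K) 1 0 = 0 := by linear_combination e1
  have hz11 : (Z : Matrix (Fin 2) (Fin 2) K) 1 1 = (Z : Matrix (Fin 2) (Fin 2) K) 0 0 := by
    linear_combination e2
  have hz01 : (Z : Matrix (Fin 2) (Fin 2) K) 0 1 = 0 := by linear_combination e3
  refine ⟨(Z : Matrix (Fin 2) (Fin 2) K) 0 0, ?_, ?_⟩
  · intro h0
    apply det_ent_ne Z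
    simp only [ent]
    rw [hz11, hz01, h0]
    ring
  · intro i j
    fin_cases i <;> fin_cases j <;> simp [ent, hz10, hz11, hz01]

lemma mob_congr {A B : GL2K} (h : (QuotientGroup.mk A : PGL2 K) = QuotientGroup.mk B) :
    mob A = mob B := by
  have hmem : A⁻¹ * B ∈ Subgroup.center GL2K := by
    rw [QuotientGroup.eq] at h
    exact h
  obtain ⟨c, hc, hZ⟩ := center_scalar hmem
  have hB : B = A * (A⁻¹ * B) := by group
  have hent : ∀ i j, ent B i j = ent A i j * c := by
    intro i j
    rw [hB, ent_mul, hZ, hZ]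
    fin_cases j <;> simp
  have hcL : alg c ≠ 0 := by
    rw [Ne, _root_.map_eq_zero]; exact hc
  funext v
  cases v with
  | none =>
    rw [mob_none_eq, mob_none_eq, hent, hent, map_mul, map_mul]
    by_cases h0 : alg (ent A 1 0) = 0
    · rw [if_pos h0, if_pos (by rw [h0, zero_mul])]
    · rw [if_neg h0, if_neg (mul_ne_zero h0 hcL), mul_div_mul_right _ _ hcL]
  | some x =>
    rw [mob_some_eq, mob_some_eq, hent, hent, hent, hent, map_mul, map_mul, map_mul, map_mul]
    have hfac : alg (ent A 1 0) * alg c * x + alg (ent A 1 1) * alg c =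
        (alg (ent A 1 0) * x + alg (ent A 1 1)) * alg c := by ring
    have hfacn : alg (ent A 0 0) * alg c * x + alg (ent A 0 1) * alg c =
        (alg (ent A 0 0) * x + alg (ent A 0 1)) * alg c := by ring
    rw [hfac, hfacn]
    by_cases h0 : alg (ent A 1 0) * x + alg (ent A 1 1) = 0
    · rw [if_pos h0, if_pos (by rw [h0, zero_mul])]
    · rw [if_neg h0, if_neg (mul_ne_zero h0 hcL), mul_div_mul_right _ _ hcL]

lemma mob_mul (A B : GL2K) (v : Option L) : mob (A * B) v = mob A (mob B v) := by
  have hdB : alg (ent B 0 0) * alg (ent B 1 1) - alg (ent B 0 1) * alg (ent B 1 0) ≠ 0 :=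
    det_alg_ne B
  have h00 : alg (ent (A * B) 0 0) = alg (ent A 0 0) * alg (ent B 0 0) +
      alg (ent A 0 1) * alg (ent B 1 0) := by rw [ent_mul, map_add, map_mul, map_mul]
  have h01 : alg (ent (A * B) 0 1) = alg (ent A 0 0) * alg (ent B 0 1) +
      alg (ent A 0 1) * alg (ent B 1 1) := by rw [ent_mul, map_add, map_mul, map_mul]
  have h10 : alg (ent (A * B) 1 0) = alg (ent A 1 0) * alg (ent B 0 0) +
      alg (ent A 1 1) * alg (ent B 1 0) := by rw [ent_mul, map_add, map_mul, map_mul]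
  have h11 : alg (ent (A * B) 1 1) = alg (ent A 1 0) * alg (ent B 0 1) +
      alg (ent A 1 1) * alg (ent B 1 1) := by rw [ent_mul, map_add, map_mul, map_mul]
  set a₁ := alg (ent A 0 0); set b₁ := alg (ent A 0 1)
  set c₁ := alg (ent A 1 0); set d₁ := alg (ent A 1 1)
  set a₂ := alg (ent B 0 0); set b₂ := alg (ent B 0 1)
  set c₂ := alg (ent B 1 0); set d₂ := alg (ent B 1 1)
  cases v with
  | none =>
    rw [mob_none_eq (A * B), mob_none_eq B, h00, h10]
    by_cases h2 : c₂ = 0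
    · have ha₂ : a₂ ≠ 0 := fun h => hdB (by rw [h, h2]; ring)
      rw [if_pos h2, mob_none_eq A,
        show a₁ * a₂ + b₁ * c₂ = a₁ * a₂ by rw [h2]; ring,
        show c₁ * a₂ + d₁ * c₂ = c₁ * a₂ by rw [h2]; ring]
      by_cases h1 : c₁ = 0
      · rw [if_pos (by rw [h1, zero_mul]), if_pos h1]
      · rw [if_neg (mul_ne_zero h1 ha₂), if_neg h1, mul_div_mul_right _ _ ha₂]
    · rw [if_neg h2, mob_some_eq A]
      have key : c₁ * a₂ + d₁ * c₂ = (c₁ * (a₂ / c₂) + d₁) * c₂ := by field_simp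
      have keyn : a₁ * a₂ + b₁ * c₂ = (a₁ * (a₂ / c₂) + b₁) * c₂ := by field_simp
      rw [key, keyn]
      by_cases h1 : c₁ * (a₂ / c₂) + d₁ = 0
      · rw [if_pos (by rw [h1, zero_mul]), if_pos h1]
      · rw [if_neg (mul_ne_zero h1 h2), if_neg h1, mul_div_mul_right _ _ h2]
  | some x =>
    rw [mob_some_eq (A * B), mob_some_eq B, h00, h01, h10, h11,
      show (c₁ * a₂ + d₁ * c₂) * x + (c₁ * b₂ + d₁ * d₂) =
        c₁ * (a₂ * x + b₂) + d₁ * (c₂ * x + d₂) by ring,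
      show (a₁ * a₂ + b₁ * c₂) * x + (a₁ * b₂ + b₁ * d₂) =
        a₁ * (a₂ * x + b₂) + b₁ * (c₂ * x + d₂) by ring]
    by_cases h2 : c₂ * x + d₂ = 0
    · have hN : a₂ * x + b₂ ≠ 0 := by
        intro h
        apply hdB
        have : a₂ * d₂ - b₂ * c₂ = a₂ * (c₂ * x + d₂) - c₂ * (a₂ * x + b₂) := by ring
        rw [this, h2, h, mul_zero, mul_zero, sub_zero]
      rw [if_pos h2, mob_none_eq A,
        show c₁ * (a₂ * x + b₂) + d₁ * (c₂ * x + d₂) = c₁ * (a₂ * x + b₂) by rw [h2]; ring,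
        show a₁ * (a₂ * x + b₂) + b₁ * (c₂ * x + d₂) = a₁ * (a₂ * x + b₂) by rw [h2]; ring]
      by_cases h1 : c₁ = 0
      · rw [if_pos (by rw [h1, zero_mul]), if_pos h1]
      · rw [if_neg (mul_ne_zero h1 hN), if_neg h1, mul_div_mul_right _ _ hN]
    · rw [if_neg h2, mob_some_eq A]
      have key : c₁ * (a₂ * x + b₂) + d₁ * (c₂ * x + d₂) =
          (c₁ * ((a₂ * x + b₂) / (c₂ * x + d₂)) + d₁) * (c₂ * x + d₂) := by
          rw [add_mul, mul_assoc, div_mul_cancel₀ _ h2]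
      have keyn : a₁ * (a₂ * x + b₂) + b₁ * (c₂ * x + d₂) =
          (a₁ * ((a₂ * x + b₂) / (c₂ * x + d₂)) + b₁) * (c₂ * x + d₂) := by
          rw [add_mul, mul_assoc, div_mul_cancel₀ _ h2]
      rw [key, keyn]
      by_cases h1 : c₁ * ((a₂ * x + b₂) / (c₂ * x + d₂)) + d₁ = 0
      · rw [if_pos (by rw [h1, zero_mul]), if_pos h1]
      · rw [if_neg (mul_ne_zero h1 h2), if_neg h1, mul_div_mul_right _ _ h2]

lemma mob_frob {σ : L →+* L} (hσK : ∀ c : K, σ (alg c) = alg c) (A : GL2K) (x : L) :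
    mob A (some (σ x)) = Option.map σ (mob A (some x)) := by
  rw [mob_some_eq, mob_some_eq]
  have hden : alg (ent A 1 0) * σ x + alg (ent A 1 1) =
      σ (alg (ent A 1 0) * x + alg (ent A 1 1)) := by
    rw [map_add, map_mul, hσK, hσK]
  have hnum : alg (ent A 0 0) * σ x + alg (ent A 0 1) =
      σ (alg (ent A 0 0) * x + alg (ent A 0 1)) := by
    rw [map_add, map_mul, hσK, hσK]
  by_cases h : alg (ent A 1 0) * x + alg (ent A 1 1) = 0
  · rw [if_pos h, hden, h, map_zero, if_pos rfl]
    rfl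
  · have h' : σ (alg (ent A 1 0) * x + alg (ent A 1 1)) ≠ 0 := by
      intro hh
      exact h (σ.injective (by rw [hh, map_zero]))
    rw [if_neg h, hden, if_neg h', hnum, ← map_div₀]
    rfl

lemma mob_iter_frob {σ : L →+* L} (hσK : ∀ c : K, σ (alg c) = alg c) (A : GL2K) (m : ℕ) (x : L) :
    mob A (some (σ^[m] x)) = Option.map (σ^[m]) (mob A (some x)) := by
  induction m with
  | zero =>
    simp only [Function.iterate_zero, Option.map_id, id]
  | succ m ih =>
    rw [Function.iterate_succ_apply', mob_frob hσK, ih, Option.map_map]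
    congr 1
    funext z
    exact (Function.iterate_succ_apply' σ m z).symm

end AuxProof

section AuxProof2

open Polynomial Finset

variable {K : Type*} [Field K] [Fintype K]

local notation "L" => AlgebraicClosure K
local notation "alg" => algebraMap K (AlgebraicClosure K)

lemma sigma_fix_alg {σ : L →+* L} (hσ : ∀ z : L, σ z = z ^ Fintype.card K) (c : K) :
    σ (alg c) = alg c := by
  rw [hσ, ← map_pow, FiniteField.pow_card]

lemma sigma_aeval {σ : L →+* L} (hσ : ∀ z : L, σ z = z ^ Fintype.card K)
    (x : L) (g : Polynomial K) :
    σ (Polynomial.aeval x g) = Polynomial.aeval (σ x) g := by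
  have hcomp : σ.comp (algebraMap K L) = algebraMap K L := by
    ext c
    exact sigma_fix_alg hσ c
  rw [Polynomial.aeval_def, Polynomial.aeval_def, Polynomial.hom_eval₂, hcomp]

lemma sigma_fixed_range {σ : L →+* L} (hσ : ∀ z : L, σ z = z ^ Fintype.card K)
    {z : L} (hz : σ z = z) : z ∈ Set.range alg := by
  classical
  set q := Fintype.card K with hq
  have hq2 : 1 < q := Fintype.one_lt_card
  set P : Polynomial L := X ^ q - X with hP
  have hdegP : P.natDegree = q := by
    rw [hP, natDegree_sub_eq_left_of_natDegree_lt]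
    · exact natDegree_X_pow q
    · rw [natDegree_X_pow, natDegree_X]
      exact hq2
  have hPne : P ≠ 0 := fun h => by
    rw [h, natDegree_zero] at hdegP
    omega
  have hroot : ∀ w : L, w ^ q = w → w ∈ P.roots.toFinset := by
    intro w hw
    rw [Multiset.mem_toFinset, mem_roots hPne]
    simp [hP, IsRoot, hw]
  set T : Finset L := Finset.univ.image alg with hT
  have hTcard : T.card = q := by
    rw [hT, Finset.card_image_of_injective _ (algebraMap K L).injective, Finset.card_univ]
  have hTsub : T ⊆ P.roots.toFinset := by
    intro t ht
    rw [hT, Finset.mem_image] at ht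
    obtain ⟨c, _, rfl⟩ := ht
    apply hroot
    rw [← map_pow, FiniteField.pow_card]
  have hcard : P.roots.toFinset.card ≤ q := by
    calc P.roots.toFinset.card ≤ Multiset.card P.roots := Multiset.toFinset_card_le _
    _ ≤ P.natDegree := P.card_roots'
    _ = q := hdegP
  have hTeq : T = P.roots.toFinset :=
    Finset.eq_of_subset_of_card_le hTsub (hTcard ▸ hcard)
  have hzT : z ∈ T := by
    rw [hTeq]
    apply hroot
    rw [← hσ, hz]
  rw [hT, Finset.mem_image] at hzT
  obtain ⟨c, _, rfl⟩ := hzT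
  exact ⟨c, rfl⟩

lemma frob_orbit_of_root {f : Polynomial K} (hf : f.Monic) (hirr : Irreducible f)
    {σ : L →+* L} (hσ : ∀ z : L, σ z = z ^ Fintype.card K)
    {α : L} (hα : Polynomial.aeval α f = 0) :
    (∀ i j : ℕ, σ^[i] α = σ^[j] α ↔ i % f.natDegree = j % f.natDegree) ∧
    (∀ β : L, Polynomial.aeval β f = 0 → ∃ k < f.natDegree, β = σ^[k] α) := by
  classical
  set n := f.natDegree with hndef
  have hn : 0 < n := hirr.natDegree_pos
  have hfne : f ≠ 0 := hf.ne_zero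
  -- iterates of σ at α are roots
  have hiter : ∀ m : ℕ, Polynomial.aeval (σ^[m] α) f = 0 := by
    intro m
    induction m with
    | zero => exact hα
    | succ m ih =>
      rw [Function.iterate_succ_apply', ← sigma_aeval hσ, ih, map_zero]
  -- the finset of roots of f in L
  have hmapne : f.map alg ≠ 0 := by
    rw [Ne, Polynomial.map_eq_zero]
    exact hfne
  have hmem : ∀ x : L, Polynomial.aeval x f = 0 → x ∈ (f.map alg).roots.toFinset := by
    intro x hx
    rw [Multiset.mem_toFinset, mem_roots hmapne, IsRoot, Polynomial.eval_map,
      ← Polynomial.aeval_def]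
    exact hx
  have hRcard : (f.map alg).roots.toFinset.card ≤ n := by
    calc (f.map alg).roots.toFinset.card ≤ Multiset.card (f.map alg).roots :=
      Multiset.toFinset_card_le _
    _ ≤ (f.map alg).natDegree := (f.map alg).card_roots'
    _ = n := hf.natDegree_map alg
  -- pigeonhole: α is a periodic point of σ
  have hperbdd : ∃ m : ℕ, m ≤ n ∧ 0 < m ∧ σ^[m] α = α := by
    have hmap : ∀ k : Fin (n + 1), ((σ^[(k : ℕ)] α : L)) ∈ (f.map alg).roots.toFinset :=
      fun k => hmem _ (hiter k)
    have hcardlt : Fintype.card {x // x ∈ (f.map alg).roots.toFinset} <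
        Fintype.card (Fin (n + 1)) := by
      rw [Fintype.card_coe, Fintype.card_fin]
      omega
    obtain ⟨i, j, hij, hijeq⟩ := Fintype.exists_ne_map_eq_of_card_lt
      (fun k : Fin (n + 1) => (⟨σ^[(k : ℕ)] α, hmap k⟩ :
        {x // x ∈ (f.map alg).roots.toFinset})) hcardlt
    have heq : σ^[(i : ℕ)] α = σ^[(j : ℕ)] α := congrArg Subtype.val hijeq
    rcases Nat.lt_or_ge (i : ℕ) (j : ℕ) with h | h
    · have : σ^[(i : ℕ)] (σ^[(j : ℕ) - (i : ℕ)] α) = σ^[(i : ℕ)] α := by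
        rw [← Function.iterate_add_apply, Nat.add_sub_cancel' h.le]
        exact heq.symm
      have hfix : σ^[(j : ℕ) - (i : ℕ)] α = α := by
        have hinj : Function.Injective (σ^[(i : ℕ)]) := Function.Injective.iterate σ.injective _
        exact hinj this
      refine ⟨(j : ℕ) - (i : ℕ), ?_, by omega, hfix⟩
      have := j.2
      omega
    · have h' : (j : ℕ) < (i : ℕ) := by
        rcases Nat.lt_or_ge (j : ℕ) (i : ℕ) with h'' | h''
        · exact h''
        · exact absurd (Fin.ext (le_antisymm h'' h)) hij
      have : σ^[(j : ℕ)] (σ^[(i : ℕ) - (j : ℕ)] α) = σ^[(j : ℕ)] α := by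
        rw [← Function.iterate_add_apply, Nat.add_sub_cancel' h'.le]
        exact heq
      have hfix : σ^[(i : ℕ) - (j : ℕ)] α = α := by
        have hinj : Function.Injective (σ^[(j : ℕ)]) := Function.Injective.iterate σ.injective _
        exact hinj this
      refine ⟨(i : ℕ) - (j : ℕ), ?_, by omega, hfix⟩
      have := i.2
      omega
  have hperiodic : α ∈ Function.periodicPts σ := by
    obtain ⟨m, _, hm0, hmfix⟩ := hperbdd
    exact Function.mk_mem_periodicPts hm0 hmfix
  set d := Function.minimalPeriod σ α with hd
  have hdpos : 0 < d := Function.minimalPeriod_pos_of_mem_periodicPts hperiodic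
  have hdperiod : σ^[d] α = α := Function.iterate_minimalPeriod
  -- the product polynomial g over L
  set g : Polynomial L := ∏ k ∈ Finset.range d, (X - C (σ^[k] α)) with hg
  have hgmonic : g.Monic := monic_prod_of_monic _ _ (fun k _ => monic_X_sub_C _)
  have hgdeg : g.natDegree = d := by
    rw [hg, natDegree_prod _ _ (fun k _ => X_sub_C_ne_zero _)]
    simp [natDegree_X_sub_C]
  -- g is fixed by σ
  have hgfix : g.map σ = g := by
    rw [hg, Polynomial.map_prod]
    have hterm : ∀ k, (X - C (σ^[k] α)).map σ = X - C (σ^[k + 1] α) := by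
      intro k
      rw [Polynomial.map_sub, Polynomial.map_X, Polynomial.map_C]
      congr 1
      rw [← Function.iterate_succ_apply' σ k α]
    calc ∏ k ∈ Finset.range d, (X - C (σ^[k] α)).map σ
        = ∏ k ∈ Finset.range d, (X - C (σ^[(k + 1) % d] α)) := by
          refine Finset.prod_congr rfl fun k hk => ?_
          rw [hterm k]
          congr 2
          rw [← Function.iterate_mod_minimalPeriod_eq, ← hd]
      _ = ∏ k ∈ Finset.range d, (X - C (σ^[k] α)) := by
          apply Finset.prod_nbij' (fun k => (k + 1) % d) (fun k => (k + (d - 1)) % d)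
          · intro k hk
            exact Finset.mem_range.mpr (Nat.mod_lt _ hdpos)
          · intro k hk
            exact Finset.mem_range.mpr (Nat.mod_lt _ hdpos)
          · intro k hk
            rw [Finset.mem_range] at hk
            rw [Nat.mod_add_mod, show k + 1 + (d - 1) = k + d by omega, Nat.add_mod_right,
              Nat.mod_eq_of_lt hk]
          · intro k hk
            rw [Finset.mem_range] at hk
            rw [Nat.mod_add_mod, show k + (d - 1) + 1 = k + d by omega, Nat.add_mod_right,
              Nat.mod_eq_of_lt hk]
          · intro k hk
            rfl
      _ = g := rfl
  -- coefficients of g are in the range of alg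
  have hgcoeff : ∀ i, g.coeff i ∈ Set.range alg := by
    intro i
    apply sigma_fixed_range hσ
    have := congrArg (fun P : Polynomial L => P.coeff i) hgfix
    simpa [Polynomial.coeff_map] using this
  obtain ⟨g₀, hg₀map, hg₀deg, hg₀monic⟩ :=
    Polynomial.lifts_and_degree_eq_and_monic
      ((Polynomial.lifts_iff_coeff_lifts g).mpr hgcoeff) hgmonic
  have hg₀natdeg : g₀.natDegree = d := by
    rw [← hgdeg]
    exact natDegree_eq_of_degree_eq hg₀deg
  -- α is a root of g₀
  have hαg₀ : Polynomial.aeval α g₀ = 0 := by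
    rw [Polynomial.aeval_def, ← Polynomial.eval_map, hg₀map, hg]
    rw [Polynomial.eval_prod]
    apply Finset.prod_eq_zero (Finset.mem_range.mpr hdpos)
    simp
  have hminpoly : minpoly K α = f := (minpoly.eq_of_irreducible_of_monic hirr hα hf).symm
  have hfdvd : f ∣ g₀ := hminpoly ▸ minpoly.dvd K α hαg₀
  have hnled : n ≤ d := by
    rw [← hg₀natdeg]
    exact Polynomial.natDegree_le_of_dvd hfdvd hg₀monic.ne_zero
  have hdlen : d ≤ n := by
    obtain ⟨m, hmn, hm0, hmfix⟩ := hperbdd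
    exact le_trans (Function.IsPeriodicPt.minimalPeriod_le hm0 hmfix) hmn
  have hdn : d = n := le_antisymm hdlen hnled
  have hfg : f = g₀ := by
    obtain ⟨u, hu⟩ := hfdvd
    have hune : u ≠ 0 := by
      intro h
      apply hg₀monic.ne_zero
      rw [hu, h, mul_zero]
    have hudeg : u.natDegree = 0 := by
      have h := hg₀natdeg
      rw [hu, natDegree_mul hfne hune] at h
      omega
    have humonic : u.Monic := hf.of_mul_monic_left (hu ▸ hg₀monic)
    rw [hu, humonic.natDegree_eq_zero.mp hudeg, mul_one]
  have hred : ∀ m : ℕ, σ^[m] α = σ^[m % n] α := by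
    intro m
    conv_lhs => rw [← Function.iterate_mod_minimalPeriod_eq (f := σ) (n := m) (x := α)]
    rw [← hd, hdn]
  constructor
  · intro i j
    constructor
    · intro hij
      rw [hred i, hred j] at hij
      have h1 : i % n < Function.minimalPeriod σ α := by
        rw [← hd, hdn]
        exact Nat.mod_lt _ hn
      have h2 : j % n < Function.minimalPeriod σ α := by
        rw [← hd, hdn]
        exact Nat.mod_lt _ hn
      exact (Function.iterate_eq_iterate_iff_of_lt_minimalPeriod h1 h2).mp hij
    · intro hij
      rw [hred i, hred j, hij]
  · intro β hβ
    have hβ' : Polynomial.eval β g = 0 := by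
      rw [Polynomial.aeval_def, ← Polynomial.eval_map,
        show f.map alg = g from by rw [hfg]; exact hg₀map] at hβ
      exact hβ
    rw [hg, Polynomial.eval_prod] at hβ'
    obtain ⟨k, hk, hk0⟩ := Finset.prod_eq_zero_iff.mp hβ'
    rw [Finset.mem_range, hdn] at hk
    refine ⟨k, hk, ?_⟩
    rw [Polynomial.eval_sub, Polynomial.eval_X, Polynomial.eval_C, sub_eq_zero] at hk0
    exact hk0

end AuxProof2

theorem invariant_finite_field_cyclic {K : Type*} [Field K] [Finite K]
    (G : Subgroup (PGL2 K)) (f : Polynomial K) (hf : f.Monic) (hfirr : Irreducible f)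
    (hfinv : GInvariant G f)
    (hreg : ∀ v : AlgebraicClosure K, Polynomial.aeval v f = 0 →
      (mobOrbit G (some v)).ncard = Nat.card G) :
    IsCyclic G ∧ Nat.card G ∣ f.natDegree := by
  classical
  haveI : Fintype K := Fintype.ofFinite K
  set n := f.natDegree with hndef
  have hn : 0 < n := hfirr.natDegree_pos
  haveI : NeZero n := ⟨hn.ne'⟩
  -- Frobenius endomorphism of the algebraic closure
  set p := ringChar K with hpdef
  haveI : CharP K p := ringChar.charP K
  obtain ⟨s, hp, hcard⟩ := FiniteField.card K p
  haveI : Fact p.Prime := ⟨hp⟩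
  haveI : CharP (AlgebraicClosure K) p :=
    charP_of_injective_algebraMap (algebraMap K (AlgebraicClosure K)).injective p
  set σ : AlgebraicClosure K →+* AlgebraicClosure K :=
    iterateFrobenius (AlgebraicClosure K) p (s : ℕ) with hσdef
  have hσ : ∀ z : AlgebraicClosure K, σ z = z ^ Fintype.card K := by
    intro z
    rw [hσdef, iterateFrobenius_def, hcard]
  have hσK : ∀ c : K, σ (algebraMap K (AlgebraicClosure K) c) =
      algebraMap K (AlgebraicClosure K) c := fun c => sigma_fix_alg hσ c
  -- a root of f in the algebraic closure
  have hdegne : f.degree ≠ 0 := (Polynomial.natDegree_pos_iff_degree_pos.mp hn).ne'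
  obtain ⟨α, hα⟩ := IsAlgClosed.exists_aeval_eq_zero (AlgebraicClosure K) f hdegne
  obtain ⟨hiff, htrans⟩ := frob_orbit_of_root hf hfirr hσ hα
  -- every element of G moves α within the Frobenius orbit, well-defined on classes
  have hE : ∀ g : G, ∃ k : ZMod n, ∀ A : Matrix.GeneralLinearGroup (Fin 2) K,
      (QuotientGroup.mk A : PGL2 K) = (g : PGL2 K) →
        mob A (some α) = some (σ^[k.val] α) := by
    intro g
    obtain ⟨A, hA⟩ := QuotientGroup.mk_surjective (g : PGL2 K)
    have hAG : (QuotientGroup.mk A : PGL2 K) ∈ G := hA ▸ g.2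
    obtain ⟨y, hy, hyroot⟩ := mob_root hf hn hfinv hAG hα
    obtain ⟨k, hk, rfl⟩ := htrans y hyroot
    refine ⟨(k : ZMod n), fun B hB => ?_⟩
    rw [mob_congr (hB.trans hA.symm), hy]
    have hvk : (σ)^[((k : ZMod n)).val] α = (σ)^[k] α :=
      (hiff _ _).mpr (by rw [ZMod.val_natCast, Nat.mod_mod_of_dvd k dvd_rfl])
    rw [hvk]
  choose χ hχ using hE
  -- χ is additive
  have hmul : ∀ g₁ g₂ : G, χ (g₁ * g₂) = χ g₁ + χ g₂ := by
    intro g₁ g₂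
    obtain ⟨A₁, hA₁⟩ := QuotientGroup.mk_surjective (g₁ : PGL2 K)
    obtain ⟨A₂, hA₂⟩ := QuotientGroup.mk_surjective (g₂ : PGL2 K)
    have h12 : (QuotientGroup.mk (A₁ * A₂) : PGL2 K) = ((g₁ * g₂ : G) : PGL2 K) := by
      rw [QuotientGroup.mk_mul, hA₁, hA₂]
      rfl
    have e12 := hχ (g₁ * g₂) (A₁ * A₂) h12
    rw [mob_mul, hχ g₂ A₂ hA₂, mob_iter_frob hσK, hχ g₁ A₁ hA₁] at e12
    simp only [Option.map_some] at e12
    have e' : σ^[(χ g₂).val + (χ g₁).val] α = σ^[(χ (g₁ * g₂)).val] α := by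
      rw [Function.iterate_add_apply]
      exact Option.some.inj e12
    have hmod := (hiff _ _).mp e'
    have hcast : (((χ g₂).val + (χ g₁).val : ℕ) : ZMod n) =
        (((χ (g₁ * g₂)).val : ℕ) : ZMod n) := (ZMod.natCast_eq_natCast_iff _ _ _).mpr hmod
    rw [Nat.cast_add, ZMod.natCast_rightInverse _, ZMod.natCast_rightInverse _,
      ZMod.natCast_rightInverse _] at hcast
    rw [← hcast, add_comm]
  -- the orbit map θ : G → mobOrbit G (some α)
  have hθmem : ∀ g : G, (some (σ^[(χ g).val] α)) ∈ mobOrbit G (some α) := by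
    intro g
    obtain ⟨A, hA⟩ := QuotientGroup.mk_surjective (g : PGL2 K)
    exact ⟨A, hA ▸ g.2, hχ g A hA⟩
  set θ : G → (mobOrbit G (some α)) := fun g => ⟨_, hθmem g⟩ with hθdef
  have hθsurj : Function.Surjective θ := by
    rintro ⟨w, A, hAG, hw⟩
    refine ⟨⟨QuotientGroup.mk A, hAG⟩, ?_⟩
    apply Subtype.ext
    show some (σ^[(χ ⟨QuotientGroup.mk A, hAG⟩).val] α) = w
    rw [← hw]
    exact (hχ ⟨QuotientGroup.mk A, hAG⟩ A rfl).symm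
  haveI : Finite ↥(mobOrbit G (some α)) := Finite.of_surjective θ hθsurj
  have hcards : Nat.card G = Nat.card ↥(mobOrbit G (some α)) := by
    rw [Nat.card_coe_set_eq, hreg α hα]
  have hθbij : Function.Bijective θ :=
    (Nat.bijective_iff_surjective_and_card θ).mpr ⟨hθsurj, hcards⟩
  have hχinj : Function.Injective χ := by
    intro g₁ g₂ h
    apply hθbij.1
    apply Subtype.ext
    show some (σ^[(χ g₁).val] α) = some (σ^[(χ g₂).val] α)
    rw [h]
  -- assemble the embedding into a cyclic group
  let Ψ : G →* Multiplicative (ZMod n) :=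
    MonoidHom.mk' (fun g => Multiplicative.ofAdd (χ g)) (by
      intro g₁ g₂
      show Multiplicative.ofAdd (χ (g₁ * g₂)) =
        Multiplicative.ofAdd (χ g₁) * Multiplicative.ofAdd (χ g₂)
      rw [hmul g₁ g₂]
      rfl)
  have hΨinj : Function.Injective Ψ := by
    intro a b h
    exact hχinj (Multiplicative.ofAdd.injective h)
  constructor
  · exact isCyclic_of_surjective (MonoidHom.ofInjective hΨinj).symm
      (MonoidHom.ofInjective hΨinj).symm.surjective
  · have hdvd : Nat.card G ∣ Nat.card (Multiplicative (ZMod n)) :=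
      Subgroup.card_dvd_of_injective Ψ hΨinj
    rwa [Nat.card_congr Multiplicative.toAdd, Nat.card_zmod] at hdvd
end

section
/- Let q be a prime power and K a field containing F_q. If V is an n-dimensional F_q-subspace of K and Q_V(x) = ∏_{v ∈ V}(x − v) is the associated subspace polynomial, then for every G-invariant monic polynomial f ∈ K[x], where G = {[( 1 v ; 0 1 )] : v ∈ V} ≤ PGL₂(K) (translation invariance: f(x + v) = f(x) for all v ∈ V), there exists a unique monic polynomial F ∈ K[x] with f(x) = F(Q_V(x)). -/
open Polynomial

/-- Every monic polynomial invariant under translation by all elements of a finite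
`F_q`-subspace `V` of `K` is uniquely of the form `F(Q_V(x))` where
`Q_V(x) = ∏_{v ∈ V} (x - v)` is the subspace polynomial. -/
theorem translation_invariant_characterization
    {Fq K : Type*} [Field Fq] [Fintype Fq] [Field K] [Algebra Fq K]
    (n : ℕ) (V : Subspace Fq K) (hV : Module.finrank Fq V = n)
    (hVfin : (V : Set K).Finite)
    (f : Polynomial K) (hf : f.Monic)
    (hinv : ∀ v ∈ V, f.comp (X + C v) = f) :
    ∃! F : Polynomial K, F.Monic ∧
      f = F.comp (∏ v ∈ hVfin.toFinset, (X - C v)) := by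
  set S : Finset K := hVfin.toFinset with hS
  have hmemS : ∀ w, w ∈ S ↔ w ∈ V := by
    intro w; simp [hS, Set.Finite.mem_toFinset]
  set Q : Polynomial K := ∏ v ∈ S, (X - C v) with hQ
  have hQm : Q.Monic := monic_prod_of_monic _ _ fun v _ => monic_X_sub_C v
  have hQdeg : Q.natDegree = S.card := by
    rw [hQ, natDegree_prod _ _ (fun v _ => X_sub_C_ne_zero v)]
    simp
  have h0S : (0 : K) ∈ S := (hmemS 0).mpr (zero_mem V)
  have hScard : 1 ≤ S.card := Finset.card_pos.mpr ⟨0, h0S⟩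
  have hQdeg1 : 1 ≤ Q.natDegree := hQdeg ▸ hScard
  -- Q is translation invariant
  have hQinv : ∀ v ∈ V, Q.comp (X + C v) = Q := by
    intro v hv
    rw [hQ, prod_comp]
    refine Finset.prod_nbij' (fun w => w - v) (fun w => w + v) ?_ ?_ ?_ ?_ ?_
    · intro w hw
      exact (hmemS _).mpr (V.sub_mem ((hmemS _).mp hw) hv)
    · intro w hw
      exact (hmemS _).mpr (V.add_mem ((hmemS _).mp hw) hv)
    · intro w _; ring
    · intro w _; ring
    · intro w _
      simp only [sub_comp, X_comp, C_comp]
      rw [C_sub]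
      ring
  -- invariant polynomials of degree < card S are constant
  have hconst : ∀ r : Polynomial K, r.natDegree < S.card →
      (∀ v ∈ V, r.comp (X + C v) = r) → r = C (r.eval 0) := by
    intro r hr hrinv
    have hz : ∀ w ∈ S, (r - C (r.eval 0)).eval w = 0 := by
      intro w hw
      have h1 : (r.comp (X + C w)).eval 0 = r.eval 0 := by
        rw [hrinv w ((hmemS w).mp hw)]
      rw [eval_comp] at h1
      simp only [eval_add, eval_X, eval_C, zero_add] at h1
      simp [h1]
    have h2 : (r - C (r.eval 0)).natDegree < S.card :=
      lt_of_le_of_lt (natDegree_sub_le _ _) (by simp [hr, hScard])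
    have := eq_zero_of_natDegree_lt_card_of_eval_eq_zero' (r - C (r.eval 0)) S hz h2
    exact sub_eq_zero.mp this
  -- existence by strong induction on degree
  have key : ∀ N : ℕ, ∀ g : Polynomial K, g.natDegree ≤ N → g.Monic →
      (∀ v ∈ V, g.comp (X + C v) = g) → ∃ F : Polynomial K, F.Monic ∧ g = F.comp Q := by
    intro N
    induction N with
    | zero =>
      intro g hdeg hgm _
      refine ⟨1, monic_one, ?_⟩
      rw [hgm.natDegree_eq_zero.mp (Nat.le_zero.mp hdeg)]
      simp
    | succ N ih =>
      intro g hdeg hgm hginv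
      by_cases h0 : g.natDegree = 0
      · refine ⟨1, monic_one, ?_⟩
        rw [hgm.natDegree_eq_zero.mp h0]
        simp
      · set d : Polynomial K := g /ₘ Q with hd
        set r : Polynomial K := g %ₘ Q with hr
        have hdiv : r + Q * d = g := modByMonic_add_div g Q
        have hrdeg : r.degree < Q.degree := degree_modByMonic_lt g hQm
        -- d and r are invariant
        have hdrinv : ∀ v ∈ V, d.comp (X + C v) = d ∧ r.comp (X + C v) = r := by
          intro v hv
          have hcomp : r.comp (X + C v) + Q * d.comp (X + C v) = g := by
            have : (r + Q * d).comp (X + C v) = g := by rw [hdiv]; exact hginv v hv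
            rw [add_comp, mul_comp, hQinv v hv] at this
            exact this
          have hcdeg : (r.comp (X + C v)).degree < Q.degree := by
            rcases eq_or_ne r 0 with h | h
            · simpa [h] using lt_of_le_of_lt (by simp [h]) hrdeg
            · have hne : r.comp (X + C v) ≠ 0 := fun hc => by
                have := natDegree_comp (p := r) (q := X + C v)
                rw [hc] at this
                simp only [natDegree_zero, natDegree_X_add_C, mul_one] at this
                have : r.comp (X + C v) = 0 → r = 0 := by
                  intro hc'
                  rcases comp_eq_zero_iff.mp hc' with h' | ⟨_, h'⟩
                  · exact h'
                  · exfalso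
                    have := congrArg natDegree h'
                    simp at this
                exact h (this hc)
              rw [degree_eq_natDegree hne, degree_eq_natDegree h] at *
              rw [natDegree_comp]
              simpa using hrdeg
          obtain ⟨h1, h2⟩ := div_modByMonic_unique (d.comp (X + C v)) (r.comp (X + C v))
            hQm ⟨hcomp, hcdeg⟩
          exact ⟨h1.symm, h2.symm⟩
        -- r is constant
        have hrcard : r.natDegree < S.card := by
          rcases eq_or_ne r 0 with h | h
          · simpa [h] using hScard
          · rw [← hQdeg]
            exact natDegree_lt_natDegree h hrdeg
        have hrC : r = C (r.eval 0) := hconst r hrcard fun v hv => (hdrinv v hv).2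
        set c : K := r.eval 0 with hc
        -- d is nonzero
        have hdne : d ≠ 0 := by
          intro hd0
          rw [hd0, mul_zero, add_zero, hrC] at hdiv
          rw [← hdiv] at h0
          simp at h0
        have hgsub : Q * d = g - C c := by rw [← hdiv, hrC]; ring
        -- g - C c is monic
        have hdegpos : 0 < g.degree := natDegree_pos_iff_degree_pos.mp (Nat.pos_of_ne_zero h0)
        have hgsubm : (g - C c).Monic := by
          unfold Monic
          rw [leadingCoeff, natDegree_sub_eq_left_of_natDegree_lt
            (by simpa using Nat.pos_of_ne_zero h0)]
          rw [coeff_sub, coeff_C, if_neg h0, sub_zero]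
          exact hgm
        have hdm : d.Monic := hQm.of_mul_monic_left (hgsub ▸ hgsubm)
        -- degree bound for d
        have hddeg : d.natDegree ≤ N := by
          have h1 : Q.natDegree + d.natDegree = (g - C c).natDegree := by
            rw [← hgsub, hQm.natDegree_mul hdm]
          have h2 : (g - C c).natDegree = g.natDegree :=
            natDegree_sub_eq_left_of_natDegree_lt (by simpa using Nat.pos_of_ne_zero h0)
          omega
        obtain ⟨G, hGm, hGd⟩ := ih d hddeg hdm fun v hv => (hdrinv v hv).1
        refine ⟨X * G + C c, ?_, ?_⟩
        · have hXG : (X * G).Monic := monic_X.mul hGm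
          refine hXG.add_of_left (lt_of_le_of_lt degree_C_le ?_)
          have h1 : (X * G).natDegree = 1 + G.natDegree := by
            rw [monic_X.natDegree_mul hGm, natDegree_X]
          rw [degree_eq_natDegree hXG.ne_zero, h1]
          exact_mod_cast (by omega : 0 < 1 + G.natDegree)
        · rw [add_comp, mul_comp, X_comp, C_comp, ← hGd, ← hdiv, hrC]
          ring
  obtain ⟨F, hFm, hFe⟩ := key f.natDegree f le_rfl hf hinv
  refine ⟨F, ⟨hFm, hFe⟩, ?_⟩
  rintro F' ⟨hF'm, hF'e⟩
  have hcomp : (F' - F).comp Q = 0 := by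
    rw [sub_comp, ← hFe, ← hF'e, sub_self]
  rcases comp_eq_zero_iff.mp hcomp with h | ⟨_, h⟩
  · exact sub_eq_zero.mp h
  · exfalso
    have := congrArg natDegree h
    rw [natDegree_C] at this
    omega
end
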